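/- arXiv:1012.4245 — 2 statements merged into one kernel-verified Lean document; each statement's English description precedes it below -/
import Mathlib

section
/- For every q > 0, every integer n ≥ 1 and every x ∈ [0,1]: R_{n,q}(1,x) = 1, R_{n,q}(t,x) = x, and R_{n,q}(t²,x) = x·v(q,x) + x(1 − v(q,x))/[n]_q, where t^m denotes the monomial function t ↦ t^m on [0,1]. -/
open Finset Filter

noncomputable section

/-- The q-integer `[n]_q = 1 + q + ⋯ + q^(n-1)`. -/
def qInt (q : ℝ) (n : ℕ) : ℝ := ∑ i ∈ Finset.range n, q ^ i

/-- The q-factorial `[n]_q!`. -/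
def qFact (q : ℝ) : ℕ → ℝ
  | 0 => 1
  | n + 1 => qFact q n * qInt q (n + 1)

/-- The q-binomial coefficient `[n k]_q`. -/
def qBinom (q : ℝ) (n k : ℕ) : ℝ := qFact q n / (qFact q k * qFact q (n - k))

/-- The Lupaş basis function `b_{nk}(q;x)`. -/
def lupasB (q : ℝ) (n k : ℕ) (x : ℝ) : ℝ :=
  qBinom q n k * q ^ (k * (k - 1) / 2) * x ^ k * (1 - x) ^ (n - k) /
    ∏ j ∈ Finset.range (n - 1), (1 - x + q ^ (j + 1) * x)

/-- The limit Lupaş basis function `b_{∞k}(q;x)` (for `0 < q < 1`, `x ∈ [0,1)`). -/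
def lupasBInf (q : ℝ) (k : ℕ) (x : ℝ) : ℝ :=
  q ^ (k * (k - 1) / 2) * (x / (1 - x)) ^ k /
    ((1 - q) ^ k * qFact q k * ∏' j : ℕ, (1 + q ^ j * (x / (1 - x))))

/-- The Lupaş q-analogue of the Bernstein operator `R_{n,q}(f,x)`. -/
def lupasR (q : ℝ) (n : ℕ) (f : ℝ → ℝ) (x : ℝ) : ℝ :=
  ∑ k ∈ Finset.range (n + 1), f (qInt q k / qInt q n) * lupasB q n k x

/-- The limit q-Lupaş operator `R_{∞,q}(f,x)` for `0 < q < 1`. -/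
def lupasRInfLow (q : ℝ) (f : ℝ → ℝ) (x : ℝ) : ℝ :=
  if x = 1 then f 1 else ∑' k : ℕ, f (1 - q ^ k) * lupasBInf q k x

/-- The limit q-Lupaş operator `R_{∞,q}(f,x)`: for `q > 1` it is defined by
reflection, `R_{∞,q}(f,x) = R_{∞,1/q}(g,1-x)` with `g(x) = f(1-x)`. -/
def lupasRInf (q : ℝ) (f : ℝ → ℝ) (x : ℝ) : ℝ :=
  if 1 < q then lupasRInfLow (1 / q) (fun t => f (1 - t)) (1 - x)
  else lupasRInfLow q f x

/-- The transform `v(q,x) = qx/(1-x+qx)`. -/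
def vq (q x : ℝ) : ℝ := q * x / (1 - x + q * x)

/-- `L_{n,q}(f,x) = R_{n,q}(f,x) - R_{∞,q}(f,x)`. -/
def lupasL (q : ℝ) (n : ℕ) (f : ℝ → ℝ) (x : ℝ) : ℝ :=
  lupasR q n f x - lupasRInf q f x

/-- The modulus of continuity `ω(f,t)` of `f` on `[0,1]`. -/
def omega1 (f : ℝ → ℝ) (t : ℝ) : ℝ :=
  sSup {d | ∃ x ∈ Set.Icc (0:ℝ) 1, ∃ y ∈ Set.Icc (0:ℝ) 1, |x - y| ≤ t ∧ d = |f x - f y|}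

/-- The second modulus of smoothness `ω₂(f,t)` of `f` on `[0,1]`. -/
def omega2 (f : ℝ → ℝ) (t : ℝ) : ℝ :=
  sSup {d | ∃ h, 0 ≤ h ∧ h ≤ t ∧ ∃ x, 0 ≤ x ∧ x ≤ 1 - 2 * h ∧
    d = |f (x + 2 * h) - 2 * f (x + h) + f x|}

/-!
Clearing the common denominator, every moment of `R_{n,q}` is a weighted sum of the terms
`[n k]_q q^{k(k-1)/2} a^k b^{n-k}` at `a = x`, `b = 1 - x`. Unweighted, these sum to
`∏_{j<n} (b + q^j a)` (Cauchy's q-binomial theorem), which at `a + b = 1` is exactly the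
denominator of the Lupaş basis. The absorption identity `[k]_q [n k]_q = [n]_q [n-1 k-1]_q`
turns the weight `[k]_q` into a factor `[n]_q a` times a q-binomial sum of degree `n - 1` at
`q a`, and `[k]_q² = [k]_q + q [k]_q [k-1]_q` reduces the second moment to absorbing twice.
-/

section QAnalogues

variable {q : ℝ}

@[simp]
lemma qInt_zero : qInt q 0 = 0 := by
  simp [qInt]

lemma qInt_pos (hq : 0 < q) {n : ℕ} (hn : n ≠ 0) : 0 < qInt q n :=
  sum_pos (fun i _ => pow_pos hq i) (nonempty_range_iff.mpr hn)

lemma qInt_add (a b : ℕ) : qInt q (a + b) = qInt q a + q ^ a * qInt q b := by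
  simp [qInt, sum_range_add, mul_sum, pow_add]

lemma qInt_succ (k : ℕ) : qInt q (k + 1) = 1 + q * qInt q k := by
  simpa [qInt, add_comm] using qInt_add (q := q) 1 k

lemma qInt_sq (k : ℕ) : qInt q k ^ 2 = qInt q k + q * (qInt q k * qInt q (k - 1)) := by
  cases k with
  | zero => simp
  | succ k => rw [Nat.add_sub_cancel, qInt_succ]; ring

lemma qFact_pos (hq : 0 < q) (n : ℕ) : 0 < qFact q n := by
  induction n with
  | zero => exact one_pos
  | succ m ih => exact mul_pos ih (qInt_pos hq m.succ_ne_zero)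

lemma qBinom_zero_right (hq : 0 < q) (n : ℕ) : qBinom q n 0 = 1 := by
  simp [qBinom, qFact, (qFact_pos hq n).ne']

lemma qBinom_self (hq : 0 < q) (n : ℕ) : qBinom q n n = 1 := by
  simp [qBinom, qFact, (qFact_pos hq n).ne']

lemma qInt_succ_mul_qBinom_succ_succ (hq : 0 < q) (n k : ℕ) :
    qInt q (k + 1) * qBinom q (n + 1) (k + 1) = qInt q (n + 1) * qBinom q n k := by
  have := (qFact_pos hq n).ne'
  have := (qFact_pos hq k).ne'
  have := (qFact_pos hq (n - k)).ne'
  have := (qInt_pos hq k.succ_ne_zero).ne'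
  rw [qBinom, qBinom, Nat.add_sub_add_right, qFact, qFact]
  field_simp

lemma qBinom_succ_succ (hq : 0 < q) {n k : ℕ} (hk : k < n) :
    qBinom q (n + 1) (k + 1) = qBinom q n (k + 1) + q ^ (n - k) * qBinom q n k := by
  obtain ⟨m, rfl⟩ : ∃ m, n = k + 1 + m := ⟨n - k - 1, by omega⟩
  have := (qFact_pos hq (k + 1 + m)).ne'
  have := (qFact_pos hq k).ne'
  have := (qFact_pos hq m).ne'
  have := (qInt_pos hq k.succ_ne_zero).ne'
  have := (qInt_pos hq m.succ_ne_zero).ne'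
  have hsplit : qInt q (k + 1 + m + 1) = qInt q (m + 1) + q ^ (m + 1) * qInt q (k + 1) := by
    rw [← qInt_add]; ring_nf
  rw [qBinom, qBinom, qBinom, show k + 1 + m + 1 - (k + 1) = m + 1 by omega,
    show k + 1 + m - (k + 1) = m by omega, show k + 1 + m - k = m + 1 by omega,
    qFact, qFact, qFact, hsplit]
  field_simp

end QAnalogues

def qBinomTerm (q : ℝ) (n k : ℕ) (a b : ℝ) : ℝ :=
  qBinom q n k * q ^ (k * (k - 1) / 2) * a ^ k * b ^ (n - k)

section QBinomTerm

variable {q : ℝ}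

theorem sum_qBinomTerm (hq : 0 < q) (n : ℕ) (a b : ℝ) :
    ∑ k ∈ range (n + 1), qBinomTerm q n k a b = ∏ j ∈ range n, (b + q ^ j * a) := by
  induction n with
  | zero => simp [qBinomTerm, qBinom, qFact]
  | succ n ih =>
    have hfirst : qBinomTerm q (n + 1) 0 a b = qBinomTerm q n 0 a b * b := by
      simp [qBinomTerm, qBinom_zero_right hq, pow_succ]
    have hlast : qBinomTerm q (n + 1) (n + 1) a b = qBinomTerm q n n a b * (q ^ n * a) := by
      simp only [qBinomTerm, qBinom_self hq, Nat.sub_self, Nat.triangle_succ]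
      ring
    have hmiddle : ∀ k ∈ range n, qBinomTerm q (n + 1) (k + 1) a b =
        qBinomTerm q n (k + 1) a b * b + qBinomTerm q n k a b * (q ^ n * a) := by
      intro k hk
      rw [mem_range] at hk
      have hb : b ^ (n - k) = b ^ (n - (k + 1)) * b := by
        rw [← pow_succ]; congr 1; omega
      have hpow : q ^ (n - k) * q ^ ((k + 1) * (k + 1 - 1) / 2) = q ^ (k * (k - 1) / 2) * q ^ n := by
        rw [← pow_add, ← pow_add, Nat.triangle_succ]; congr 1; omega
      unfold qBinomTerm
      rw [qBinom_succ_succ hq hk, Nat.add_sub_add_right n 1 k, hb]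
      linear_combination (qBinom q n k * a ^ (k + 1) * b ^ (n - (k + 1)) * b) * hpow
    rw [prod_range_succ, ← ih, mul_add, sum_mul, sum_mul, sum_range_succ, sum_range_succ',
      sum_range_succ', sum_range_succ, sum_congr rfl hmiddle, sum_add_distrib, hfirst, hlast]
    ring

lemma qInt_succ_mul_qBinomTerm_succ_succ (hq : 0 < q) (n k : ℕ) (a b : ℝ) :
    qInt q (k + 1) * qBinomTerm q (n + 1) (k + 1) a b =
      qInt q (n + 1) * a * qBinomTerm q n k (q * a) b := by
  have hpow : q ^ ((k + 1) * (k + 1 - 1) / 2) = q ^ (k * (k - 1) / 2) * q ^ k := by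
    rw [Nat.triangle_succ, pow_add]
  unfold qBinomTerm
  rw [hpow, Nat.add_sub_add_right, mul_pow]
  linear_combination (q ^ (k * (k - 1) / 2) * q ^ k * a ^ (k + 1) * b ^ (n - k)) *
    qInt_succ_mul_qBinom_succ_succ hq n k

lemma sum_qInt_mul_qBinomTerm_succ (hq : 0 < q) (n : ℕ) (g : ℕ → ℝ) (a b : ℝ) :
    ∑ k ∈ range (n + 2), qInt q k * g k * qBinomTerm q (n + 1) k a b =
      qInt q (n + 1) * a * ∑ k ∈ range (n + 1), g (k + 1) * qBinomTerm q n k (q * a) b := by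
  rw [sum_range_succ', qInt_zero, zero_mul, zero_mul, add_zero, mul_sum]
  refine sum_congr rfl fun k _ => ?_
  rw [mul_right_comm, qInt_succ_mul_qBinomTerm_succ_succ hq]
  ring

theorem sum_qInt_mul_qBinomTerm (hq : 0 < q) (n : ℕ) (a b : ℝ) :
    ∑ k ∈ range (n + 1), qInt q k * qBinomTerm q n k a b =
      qInt q n * a * ∏ j ∈ range (n - 1), (b + q ^ (j + 1) * a) := by
  cases n with
  | zero => simp
  | succ n =>
    simpa [sum_qBinomTerm hq, pow_succ, mul_assoc] using
      sum_qInt_mul_qBinomTerm_succ hq n (fun _ => 1) a b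

-- The factor `b + q a` completes `∏_{j < n-2} (b + q^(j+2) a)` to the denominator's product,
-- which also keeps the identity true for `n ≤ 1`.
theorem sum_qInt_mul_qInt_pred_mul_qBinomTerm (hq : 0 < q) (n : ℕ) (a b : ℝ) :
    (∑ k ∈ range (n + 1), qInt q k * qInt q (k - 1) * qBinomTerm q n k a b) * (b + q * a) =
      qInt q n * qInt q (n - 1) * q * a ^ 2 * ∏ j ∈ range (n - 1), (b + q ^ (j + 1) * a) := by
  rcases n with _ | _ | n
  · simp
  · simp [sum_range_succ]
  · rw [sum_qInt_mul_qBinomTerm_succ hq (n + 1) (fun k => qInt q (k - 1)) a b]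
    simp only [Nat.add_sub_cancel]
    rw [sum_qInt_mul_qBinomTerm hq, Nat.add_sub_cancel, prod_range_succ']
    simp only [pow_succ, mul_assoc]
    ring

lemma sum_qInt_sq_mul_qBinomTerm (n : ℕ) (a b : ℝ) :
    ∑ k ∈ range (n + 1), qInt q k ^ 2 * qBinomTerm q n k a b =
      ∑ k ∈ range (n + 1), qInt q k * qBinomTerm q n k a b +
        q * ∑ k ∈ range (n + 1), qInt q k * qInt q (k - 1) * qBinomTerm q n k a b := by
  rw [mul_sum, ← sum_add_distrib]
  exact sum_congr rfl fun k _ => by rw [qInt_sq]; ring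

end QBinomTerm

lemma one_sub_add_mul_pos {c x : ℝ} (hc : 0 < c) (hx : x ∈ Set.Icc (0 : ℝ) 1) :
    0 < 1 - x + c * x := by
  nlinarith [hx.1, hx.2, mul_nonneg (mul_nonneg hc.le hc.le) hx.1]

lemma prod_range_one_sub_add_pow_mul (q x : ℝ) (n : ℕ) :
    ∏ j ∈ range n, (1 - x + q ^ j * x) = ∏ j ∈ range (n - 1), (1 - x + q ^ (j + 1) * x) := by
  cases n with
  | zero => simp
  | succ n => simp [prod_range_succ']

lemma lupasR_eq_sum_div (q : ℝ) (n : ℕ) (f : ℝ → ℝ) (x : ℝ) :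
    lupasR q n f x = (∑ k ∈ range (n + 1), f (qInt q k / qInt q n) * qBinomTerm q n k x (1 - x)) /
      ∏ j ∈ range (n - 1), (1 - x + q ^ (j + 1) * x) := by
  simp only [lupasR, lupasB, qBinomTerm, sum_div, mul_div_assoc]

theorem lupasR_moments (q : ℝ) (hq : 0 < q) (n : ℕ) (hn : 1 ≤ n)
    (x : ℝ) (hx : x ∈ Set.Icc (0:ℝ) 1) :
    lupasR q n (fun _ => 1) x = 1 ∧
    lupasR q n (fun t => t) x = x ∧
    lupasR q n (fun t => t ^ 2) x = x * vq q x + x * (1 - vq q x) / qInt q n := by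
  obtain ⟨m, rfl⟩ : ∃ m, n = m + 1 := ⟨n - 1, by omega⟩
  have h0 := sum_qBinomTerm hq (m + 1) x (1 - x)
  rw [prod_range_one_sub_add_pow_mul] at h0
  have h1 := sum_qInt_mul_qBinomTerm hq (m + 1) x (1 - x)
  have h2 := sum_qInt_mul_qInt_pred_mul_qBinomTerm hq (m + 1) x (1 - x)
  have hD : 0 < ∏ j ∈ range m, (1 - x + q ^ (j + 1) * x) :=
    prod_pos fun j _ => one_sub_add_mul_pos (pow_pos hq _) hx
  have hc : 0 < 1 - x + q * x := one_sub_add_mul_pos hq hx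
  have hN : qInt q (m + 1) ≠ 0 := (qInt_pos hq m.succ_ne_zero).ne'
  simp only [lupasR_eq_sum_div, Nat.add_sub_cancel] at h0 h1 h2 ⊢
  generalize ∏ j ∈ range m, (1 - x + q ^ (j + 1) * x) = D at hD h0 h1 h2 ⊢
  refine ⟨?_, ?_, ?_⟩
  · simp only [one_mul, h0, div_self hD.ne']
  · simp only [div_mul_eq_mul_div, ← sum_div, h1]
    field_simp
  · simp only [div_pow, div_mul_eq_mul_div, ← sum_div, sum_qInt_sq_mul_qBinomTerm, h1]
    rw [eq_div_of_mul_eq hc.ne' h2, vq]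
    rw [qInt_succ m] at hN ⊢
    field_simp
    ring
end
end

section
/- For every q with 0 < q < 1 and every x ∈ [0,1]: R_{∞,q}(1,x) = 1, R_{∞,q}(t,x) = x, and R_{∞,q}(t²,x) = x·v(q,x) + (1−q)·x(1 − v(q,x)) = x − q·x(1 − v(q,x)), where t^m denotes the monomial function t ↦ t^m on [0,1]. -/
/-!
Put `t = x/(1-x)` and `E(t) = ∑ₖ q^(k(k-1)/2) t^k / (q;q)_k`. Splitting off the first term gives
`E(t) = (1+t) E(qt)`, hence `E(t) = ∏_{j<n} (1 + q^j t) · E(q^n t)` with `E(q^n t) → 1`: this is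
Euler's identity `∏ⱼ (1 + q^j t) = E(t)`, and it exhibits `b_{∞k}(q;x)` as the `k`-th term of `E(t)`
divided by `E(t)`. As the `k`-th term of `E(q^j t)` is `q^(jk)` times that of `E(t)`, the sums
`∑ₖ q^(jk) b_{∞k}(q;x)` are `E(q^j t)/E(t) = ∏_{i<j} (1 + q^i t)⁻¹`; the moments of `1`, `t`, `t²`
at the nodes `1 - q^k` are combinations of these for `j ≤ 2`.
-/

open Finset Filter

noncomputable section

open Topology

/-- The q-Pochhammer symbol `(q;q)_k`. -/
def qPochhammer (q : ℝ) (k : ℕ) : ℝ := ∏ i ∈ range k, (1 - q ^ (i + 1))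

/-- The coefficients of Euler's series `∑ₖ q^(k(k-1)/2) t^k / (q;q)_k = ∏ⱼ (1 + q^j t)`. -/
def eulerCoeff (q t : ℝ) (k : ℕ) : ℝ := q ^ (k * (k - 1) / 2) * t ^ k / qPochhammer q k

def eulerSeries (q t : ℝ) : ℝ := ∑' k, eulerCoeff q t k

section Euler

variable {q t : ℝ}

lemma one_sub_pow_mul_qFact (q : ℝ) (k : ℕ) : (1 - q) ^ k * qFact q k = qPochhammer q k := by
  induction k with
  | zero => simp [qFact, qPochhammer]
  | succ k ih =>
    have hgeom : (1 - q) * qInt q (k + 1) = 1 - q ^ (k + 1) := by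
      rw [qInt, mul_comm, geom_sum_mul_neg]
    rw [qPochhammer, prod_range_succ, ← qPochhammer, ← ih, ← hgeom, qFact]
    ring

lemma qPochhammer_pos (hq0 : 0 ≤ q) (hq1 : q < 1) (k : ℕ) : 0 < qPochhammer q k :=
  prod_pos fun i _ => sub_pos.2 (pow_lt_one₀ hq0 hq1 i.succ_ne_zero)

lemma eulerCoeff_zero (q t : ℝ) : eulerCoeff q t 0 = 1 := by
  simp [eulerCoeff, qPochhammer]

lemma eulerCoeff_succ (q t : ℝ) (k : ℕ) :
    eulerCoeff q t (k + 1) = q ^ k * t / (1 - q ^ (k + 1)) * eulerCoeff q t k := by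
  rw [eulerCoeff, eulerCoeff, qPochhammer, qPochhammer, prod_range_succ, Nat.triangle_succ,
    pow_add, pow_succ t]
  simp only [div_eq_mul_inv, mul_inv]
  ring

lemma eulerCoeff_mul_left (q c t : ℝ) (k : ℕ) :
    eulerCoeff q (c * t) k = c ^ k * eulerCoeff q t k := by
  simp only [eulerCoeff, mul_pow]
  ring

lemma eulerCoeff_nonneg (hq0 : 0 ≤ q) (hq1 : q < 1) (ht : 0 ≤ t) (k : ℕ) :
    0 ≤ eulerCoeff q t k := by
  have := qPochhammer_pos hq0 hq1 k
  unfold eulerCoeff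
  positivity

lemma summable_eulerCoeff (hq0 : 0 ≤ q) (hq1 : q < 1) (t : ℝ) : Summable (eulerCoeff q t) := by
  refine summable_of_ratio_norm_eventually_le (r := 1 / 2) (by norm_num) ?_
  have hsmall : ∀ᶠ k : ℕ in atTop, q ^ k * |t| ≤ (1 - q) / 2 := by
    have := (tendsto_pow_atTop_nhds_zero_of_lt_one hq0 hq1).mul_const |t|
    rw [zero_mul] at this
    exact this.eventually (eventually_le_nhds (by linarith))
  filter_upwards [hsmall] with k hk
  have hden : 1 - q ≤ 1 - q ^ (k + 1) := by
    linarith [pow_le_pow_of_le_one hq0 hq1.le (Nat.le_add_left 1 k), pow_one q]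
  rw [eulerCoeff_succ, norm_mul]
  refine mul_le_mul_of_nonneg_right ?_ (norm_nonneg _)
  rw [norm_div, norm_mul, Real.norm_eq_abs, Real.norm_eq_abs, Real.norm_eq_abs,
    abs_of_nonneg (pow_nonneg hq0 k), abs_of_pos (a := 1 - q ^ (k + 1)) (by linarith),
    div_le_iff₀ (by linarith)]
  linarith

lemma eulerSeries_zero (q : ℝ) : eulerSeries q 0 = 1 := by
  rw [eulerSeries, tsum_eq_single 0 fun k hk => by simp [eulerCoeff, hk], eulerCoeff_zero]

lemma one_le_eulerSeries (hq0 : 0 ≤ q) (hq1 : q < 1) (ht : 0 ≤ t) : 1 ≤ eulerSeries q t := by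
  simpa [eulerSeries, eulerCoeff_zero] using (summable_eulerCoeff hq0 hq1 t).le_tsum 0
    fun k _ => eulerCoeff_nonneg hq0 hq1 ht k

lemma eulerSeries_eq_one_add_mul (hq0 : 0 ≤ q) (hq1 : q < 1) (t : ℝ) :
    eulerSeries q t = (1 + t) * eulerSeries q (q * t) := by
  have hs := summable_eulerCoeff hq0 hq1
  have hsplit : ∀ k, eulerCoeff q t (k + 1) =
      eulerCoeff q (q * t) (k + 1) + t * eulerCoeff q (q * t) k := by
    intro k
    have hk : 1 - q ^ (k + 1) ≠ 0 := (sub_pos.2 (pow_lt_one₀ hq0 hq1 k.succ_ne_zero)).ne'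
    rw [eulerCoeff_mul_left, eulerCoeff_mul_left, eulerCoeff_succ]
    field_simp
    ring
  calc eulerSeries q t = eulerCoeff q t 0 + ∑' k, eulerCoeff q t (k + 1) :=
        (hs t).tsum_eq_zero_add
    _ = (eulerCoeff q (q * t) 0 + ∑' k, eulerCoeff q (q * t) (k + 1)) +
          t * eulerSeries q (q * t) := by
        rw [tsum_congr hsplit, ((summable_nat_add_iff 1).2 (hs (q * t))).tsum_add
          ((hs (q * t)).mul_left t), tsum_mul_left, eulerCoeff_zero, eulerCoeff_zero, eulerSeries]
        ring
    _ = (1 + t) * eulerSeries q (q * t) := by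
        rw [← (hs (q * t)).tsum_eq_zero_add, ← eulerSeries]
        ring

lemma eulerSeries_eq_prod_mul (hq0 : 0 ≤ q) (hq1 : q < 1) (t : ℝ) (n : ℕ) :
    eulerSeries q t = (∏ j ∈ range n, (1 + q ^ j * t)) * eulerSeries q (q ^ n * t) := by
  induction n with
  | zero => simp
  | succ n ih =>
    rw [ih, prod_range_succ, mul_assoc, pow_succ', mul_assoc q,
      ← eulerSeries_eq_one_add_mul hq0 hq1]

lemma tendsto_eulerSeries_pow_mul (hq0 : 0 ≤ q) (hq1 : q < 1) (t : ℝ) :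
    Tendsto (fun n => eulerSeries q (q ^ n * t)) atTop (𝓝 1) := by
  have hpow := tendsto_pow_atTop_nhds_zero_of_lt_one hq0 hq1
  have hlim := tendsto_tsum_of_dominated_convergence (𝓕 := atTop)
    (f := fun n k => (q ^ n) ^ k * eulerCoeff q t k) (g := fun k => 0 ^ k * eulerCoeff q t k)
    (summable_eulerCoeff hq0 hq1 t).norm (fun k => (hpow.pow k).mul_const _)
    (Eventually.of_forall fun n k => by
      rw [norm_mul]
      exact mul_le_of_le_one_left (norm_nonneg _)
        (by simpa [abs_of_nonneg hq0] using pow_le_one₀ (pow_nonneg hq0 n) (pow_le_one₀ hq0 hq1.le)))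
  simp_rw [← eulerCoeff_mul_left, zero_mul] at hlim
  rwa [← eulerSeries, eulerSeries_zero] at hlim

lemma hasProd_one_add_pow_mul (hq0 : 0 ≤ q) (hq1 : q < 1) (t : ℝ) :
    HasProd (fun j => 1 + q ^ j * t) (eulerSeries q t) := by
  have hmul : Multipliable fun j => 1 + q ^ j * t :=
    Real.multipliable_one_add_of_summable ((summable_geometric_of_lt_one hq0 hq1).mul_right t)
  have hE := tendsto_eulerSeries_pow_mul hq0 hq1 t
  suffices ∏' j, (1 + q ^ j * t) = eulerSeries q t from this ▸ hmul.hasProd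
  refine tendsto_nhds_unique hmul.hasProd.tendsto_prod_nat ?_
  have hdiv : Tendsto (fun n => eulerSeries q t / eulerSeries q (q ^ n * t)) atTop
      (𝓝 (eulerSeries q t)) := by
    have h := (tendsto_const_nhds (x := eulerSeries q t)).div hE one_ne_zero
    rwa [div_one] at h
  refine hdiv.congr' ?_
  filter_upwards [hE.eventually_ne one_ne_zero] with n hn
  rw [eulerSeries_eq_prod_mul hq0 hq1 t n, mul_div_cancel_right₀ _ hn]

end Euler

section Lupas

variable {q x : ℝ}

lemma lupasBInf_eq_eulerCoeff_div (hq0 : 0 ≤ q) (hq1 : q < 1) (k : ℕ) :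
    lupasBInf q k x = eulerCoeff q (x / (1 - x)) k / eulerSeries q (x / (1 - x)) := by
  rw [lupasBInf, one_sub_pow_mul_qFact, (hasProd_one_add_pow_mul hq0 hq1 _).tprod_eq, eulerCoeff,
    div_div]

/-- By Euler's identity the sum is `E(q^j t) / E(t) = ∏_{i<j} (1 + q^i t)⁻¹`, where `t = x/(1-x)`
and `E = eulerSeries q`. -/
lemma hasSum_pow_mul_lupasBInf (hq0 : 0 ≤ q) (hq1 : q < 1) (hx0 : 0 ≤ x) (hx1 : x < 1) (j : ℕ) :
    HasSum (fun k => (q ^ k) ^ j * lupasBInf q k x)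
      (∏ i ∈ range j, (1 - x) / (1 - x + q ^ i * x)) := by
  set t := x / (1 - x) with ht_def
  have ht : 0 ≤ t := div_nonneg hx0 (sub_nonneg.2 hx1.le)
  have hE : eulerSeries q (q ^ j * t) ≠ 0 :=
    (zero_lt_one.trans_le (one_le_eulerSeries hq0 hq1 (by positivity))).ne'
  have hterm : ∀ k, (q ^ k) ^ j * lupasBInf q k x = eulerCoeff q (q ^ j * t) k / eulerSeries q t := by
    intro k
    rw [lupasBInf_eq_eulerCoeff_div hq0 hq1, eulerCoeff_mul_left, ← pow_mul, ← pow_mul, mul_comm k,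
      mul_div_assoc]
  have hval : ∏ i ∈ range j, (1 - x) / (1 - x + q ^ i * x) =
      eulerSeries q (q ^ j * t) / eulerSeries q t := by
    rw [eulerSeries_eq_prod_mul hq0 hq1 t j, div_mul_cancel_right₀ hE, ← prod_inv_distrib]
    refine prod_congr rfl fun i _ => ?_
    have h1x : 0 < 1 - x := sub_pos.2 hx1
    rw [ht_def]
    field_simp
  rw [funext hterm, hval]
  exact (summable_eulerCoeff hq0 hq1 (q ^ j * t)).hasSum.div_const _

lemma lupasRInfLow_one (hq0 : 0 ≤ q) (hq1 : q < 1) (hx : x ∈ Set.Icc 0 1) :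
    lupasRInfLow q (fun _ => 1) x = 1 := by
  rcases hx.2.eq_or_lt with rfl | hx1
  · simp [lupasRInfLow]
  · rw [lupasRInfLow, if_neg hx1.ne]
    simpa using (hasSum_pow_mul_lupasBInf hq0 hq1 hx.1 hx1 0).tsum_eq

lemma lupasRInfLow_id (hq0 : 0 ≤ q) (hq1 : q < 1) (hx : x ∈ Set.Icc 0 1) :
    lupasRInfLow q (fun t => t) x = x := by
  rcases hx.2.eq_or_lt with rfl | hx1
  · simp [lupasRInfLow]
  · have h := hasSum_pow_mul_lupasBInf hq0 hq1 hx.1 hx1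
    have hterm : ∀ k, (1 - q ^ k) * lupasBInf q k x =
        (q ^ k) ^ 0 * lupasBInf q k x - (q ^ k) ^ 1 * lupasBInf q k x := fun k => by ring
    simp only [lupasRInfLow, if_neg hx1.ne]
    rw [tsum_congr hterm, ((h 0).sub (h 1)).tsum_eq]
    simp

lemma lupasRInfLow_sq (hq0 : 0 < q) (hq1 : q < 1) (hx : x ∈ Set.Icc 0 1) :
    lupasRInfLow q (fun t => t ^ 2) x = x - q * (x * (1 - vq q x)) := by
  rcases hx.2.eq_or_lt with rfl | hx1
  · simp [lupasRInfLow, vq, hq0.ne']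
  · have h := hasSum_pow_mul_lupasBInf hq0.le hq1 hx.1 hx1
    have hterm : ∀ k, (1 - q ^ k) ^ 2 * lupasBInf q k x = (q ^ k) ^ 0 * lupasBInf q k x -
        2 * ((q ^ k) ^ 1 * lupasBInf q k x) + (q ^ k) ^ 2 * lupasBInf q k x := fun k => by ring
    simp only [lupasRInfLow, if_neg hx1.ne]
    rw [tsum_congr hterm, (((h 0).sub ((h 1).mul_left 2)).add (h 2)).tsum_eq]
    simp only [prod_range_succ, prod_range_zero, pow_zero, pow_one, one_mul, sub_add_cancel,
      div_one, vq]
    have hD : 1 - x + q * x ≠ 0 := by nlinarith [hx.1]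
    set D := 1 - x + q * x with hD_def
    field_simp
    rw [hD_def]
    ring

end Lupas

theorem lupasRInf_moments (q : ℝ) (hq0 : 0 < q) (hq1 : q < 1)
    (x : ℝ) (hx : x ∈ Set.Icc (0:ℝ) 1) :
    lupasRInf q (fun _ => 1) x = 1 ∧
    lupasRInf q (fun t => t) x = x ∧
    lupasRInf q (fun t => t ^ 2) x = x * vq q x + (1 - q) * (x * (1 - vq q x)) ∧
    lupasRInf q (fun t => t ^ 2) x = x - q * (x * (1 - vq q x)) := by
  have hlow : ∀ f, lupasRInf q f x = lupasRInfLow q f x := fun f => if_neg (not_lt.2 hq1.le)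
  have hsq := lupasRInfLow_sq hq0 hq1 hx
  simp only [hlow]
  exact ⟨lupasRInfLow_one hq0.le hq1 hx, lupasRInfLow_id hq0.le hq1 hx, by rw [hsq]; ring, hsq⟩
end
end
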